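/- Let f ≠ 0, b ≠ 0 and σ be real numbers and define Φ₁(a) = (f²b²/a³)·(e^{−a} − 1 + a) + σ² for a > 0. Then Φ₁ is strictly decreasing on (0, ∞), and for any 0 < α < β and any real R with Φ₁(β) < R < Φ₁(α) there exists a unique a ∈ (α, β) such that Φ₁(a) = R. -/

import Mathlib

/-!
Write `Φ₁ = f²b² · g + σ²` with `g a = (e^{−a} − 1 + a) / a³`. The numerator of `g'` is
`3 − 2a − (a + 3) e^{−a}`, which is negative for `a > 0`: for `a ≤ 3` by the bound
`e^{−a} ≥ (1 − a/3)³`, and trivially for `a > 3`. Hence `Φ₁` is strictly decreasing; existence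
of a root of `Φ₁ a = R` is the intermediate value theorem and uniqueness is injectivity.
-/
open Real Set

theorem three_sub_two_mul_lt_add_three_mul_exp_neg {a : ℝ} (ha : 0 < a) :
    3 - 2 * a < (a + 3) * exp (-a) := by
  rcases le_or_gt a 3 with ha3 | ha3
  · -- `(a + 3) (1 - a/3)³ = 3 - 2a + a³ (6 - a) / 27`
    have hexp : (1 - a / 3) ^ 3 ≤ exp (-a) := one_sub_div_pow_le_exp_neg (by norm_num [ha3])
    nlinarith [mul_le_mul_of_nonneg_left hexp (by linarith : 0 ≤ a + 3), pow_pos ha 3]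
  · nlinarith [exp_pos (-a)]

theorem hasDerivAt_exp_neg_sub_one_add_div_pow_three {a : ℝ} (ha : a ≠ 0) :
    HasDerivAt (fun x => (exp (-x) - 1 + x) / x ^ 3)
      ((3 - 2 * a - (a + 3) * exp (-a)) / a ^ 4) a := by
  have hnum : HasDerivAt (fun x => exp (-x) - 1 + x) (1 - exp (-a)) a := by
    simpa [neg_add_eq_sub] using (((hasDerivAt_neg a).exp).sub_const 1).fun_add (hasDerivAt_id a)
  refine (hnum.fun_div (hasDerivAt_pow 3 a) (pow_ne_zero 3 ha)).congr_deriv ?_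
  field_simp
  ring

theorem strictAntiOn_exp_neg_sub_one_add_div_pow_three :
    StrictAntiOn (fun x => (exp (-x) - 1 + x) / x ^ 3) (Ioi 0) := by
  refine strictAntiOn_of_hasDerivWithinAt_neg (convex_Ioi 0) ?_
    (fun a ha => (hasDerivAt_exp_neg_sub_one_add_div_pow_three
      (ne_of_gt (interior_subset ha : 0 < a))).hasDerivWithinAt) ?_
  · exact ContinuousOn.div (by fun_prop) (by fun_prop) fun x hx => pow_ne_zero 3 (ne_of_gt hx)
  · intro a ha
    rw [interior_Ioi] at ha
    exact div_neg_of_neg_of_pos (by linarith [three_sub_two_mul_lt_add_three_mul_exp_neg ha])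
      (pow_pos ha 4)

theorem StrictAntiOn.existsUnique_mem_Ioo_eq {α δ : Type*} [TopologicalSpace α]
    [ConditionallyCompleteLinearOrder α] [OrderTopology α] [DenselyOrdered α]
    [LinearOrder δ] [TopologicalSpace δ] [OrderClosedTopology δ]
    {f : α → δ} {s : Set α} (hf : StrictAntiOn f s) (hcont : ContinuousOn f s)
    {a b : α} {r : δ} (hab : a ≤ b) (hs : Icc a b ⊆ s) (hbr : f b < r) (hra : r < f a) :
    ∃! x : α, x ∈ Ioo a b ∧ f x = r := by
  obtain ⟨x, hx, hfx⟩ := intermediate_value_Ioo' hab (hcont.mono hs) ⟨hbr, hra⟩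
  refine ⟨x, ⟨hx, hfx⟩, fun y ⟨hy, hfy⟩ => ?_⟩
  exact hf.injOn (hs (Ioo_subset_Icc_self hy)) (hs (Ioo_subset_Icc_self hx)) (hfy.trans hfx.symm)

/-- The moment function `Φ₁(a) = (f²b²/a³)(e^{−a} − 1 + a) + σ²` is strictly
decreasing on `(0, ∞)`, and the method-of-moments equation `Φ₁(a) = R` has a
unique solution in `(α, β)` whenever `Φ₁(β) < R < Φ₁(α)`. -/
theorem mme_equation_unique_solution
    (f b σ : ℝ) (hf : f ≠ 0) (hb : b ≠ 0)
    (Φ : ℝ → ℝ)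
    (hΦ : ∀ a : ℝ, Φ a = f ^ 2 * b ^ 2 / a ^ 3 * (Real.exp (-a) - 1 + a) + σ ^ 2) :
    StrictAntiOn Φ (Set.Ioi (0 : ℝ)) ∧
    ∀ α β R : ℝ, 0 < α → α < β → Φ β < R → R < Φ α →
      ∃! a : ℝ, a ∈ Set.Ioo α β ∧ Φ a = R := by
  have hC : 0 < f ^ 2 * b ^ 2 := by positivity
  have hΦ' : Φ = fun a => f ^ 2 * b ^ 2 * ((exp (-a) - 1 + a) / a ^ 3) + σ ^ 2 :=
    funext fun a => by rw [hΦ, mul_div_assoc', div_mul_eq_mul_div]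
  have hanti : StrictAntiOn Φ (Ioi 0) := by
    rw [hΦ']
    exact fun x hx y hy hxy => add_lt_add_left
      (mul_lt_mul_of_pos_left (strictAntiOn_exp_neg_sub_one_add_div_pow_three hx hy hxy) hC) _
  have hcont : ContinuousOn Φ (Ioi 0) := by
    rw [hΦ']
    exact fun x hx => (hasDerivAt_exp_neg_sub_one_add_div_pow_three (ne_of_gt hx)).continuousAt
      |>.const_mul _ |>.add_const _ |>.continuousWithinAt
  exact ⟨hanti, fun α β R hα hαβ hβR hRα =>
    hanti.existsUnique_mem_Ioo_eq hcont hαβ.le (fun x hx => hα.trans_le hx.1) hβR hRα⟩
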